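/- Assume the pay-off function μ is convex, and assume that S is totally ordered, or that for every z ∈ 𝓛 \ {⊥} there exists a ∈ 𝓛 with a < z and μ_A(⊥,z) = μ_max(a,z). Then: (1) any two elements of St(μ) are comparable for ≤; in particular, if 𝓛 satisfies the ascending chain condition and St(μ) is nonempty, then St(μ) has a greatest element; (2) for every x ∈ St(μ) and every y ∈ 𝓛 with x < y, one has μ_A(⊥,y) = μ_A(x,y). -/
import Mathlib


variable {L : Type*} {S : Type*}

/-- `μ_max(a,y) := sup { μ(a,b) | b ∈ 𝓛, a < b ≤ y }`. -/
def muMax [Preorder L] [CompleteLattice S] (μ : L → L → S) (a y : L) : S :=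
  ⨆ b ∈ {b : L | a < b ∧ b ≤ y}, μ a b

/-- `μ_A(x,y) := inf { μ_max(a,y) | a ∈ 𝓛, x ≤ a < y }`. -/
def muA [Preorder L] [CompleteLattice S] (μ : L → L → S) (x y : L) : S :=
  ⨅ a ∈ {a : L | x ≤ a ∧ a < y}, muMax μ a y

/-- The pay-off function `μ` is convex if `μ(x ⊓ y, x) ≤ μ(y, x ⊔ y)` whenever `x ≰ y`. -/
def ConvexPayoff [Lattice L] [CompleteLattice S] (μ : L → L → S) : Prop :=
  ∀ x y : L, ¬ x ≤ y → μ (x ⊓ y) x ≤ μ y (x ⊔ y)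


/-- `St(μ)`: the set of `x ∈ 𝓛 \ {⊥}` satisfying conditions (S1) and (S2). -/
def St [Preorder L] [OrderBot L] [CompleteLattice S] (μ : L → L → S) : Set L :=
  {x : L | x ≠ ⊥ ∧ (∀ y : L, y ≠ ⊥ → ¬ muA μ ⊥ x < muA μ ⊥ y) ∧
    (∀ y : L, y ≠ ⊥ → muA μ ⊥ y = muA μ ⊥ x → y ≤ x)}

section Aux

variable [Lattice L] [BoundedOrder L] [CompleteLattice S] {μ : L → L → S}

lemma le_muMax {a b y : L} (h1 : a < b) (h2 : b ≤ y) : μ a b ≤ muMax μ a y :=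
  le_biSup _ (show b ∈ {b : L | a < b ∧ b ≤ y} from ⟨h1, h2⟩)

lemma muMax_mono_right {a y y' : L} (h : y ≤ y') : muMax μ a y ≤ muMax μ a y' := by
  refine iSup₂_le fun b hb => le_muMax hb.1 (hb.2.trans h)

lemma muA_le_muMax {x a y : L} (h1 : x ≤ a) (h2 : a < y) : muA μ x y ≤ muMax μ a y :=
  biInf_le _ (show a ∈ {a : L | x ≤ a ∧ a < y} from ⟨h1, h2⟩)

lemma muA_bot_le {x y : L} : muA μ ⊥ y ≤ muA μ x y := by
  refine le_iInf₂ fun a ha => muA_le_muMax bot_le ha.2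

/-- Key convexity consequence: if `x ≰ a`, then `μ_max(x⊓a, x) ≤ μ_max(a, a⊔x)`. -/
lemma muMax_convex (hconv : ConvexPayoff μ) {x a : L} (hxa : ¬ x ≤ a) :
    muMax μ (x ⊓ a) x ≤ muMax μ a (a ⊔ x) := by
  refine iSup₂_le fun b hb => ?_
  obtain ⟨hb1, hb2⟩ := hb
  have hba : ¬ b ≤ a := fun h => absurd (le_inf hb2 h) (not_le_of_gt hb1)
  have hkey : b ⊓ a = x ⊓ a :=
    le_antisymm (le_inf (inf_le_left.trans hb2) inf_le_right)
      (le_inf hb1.le inf_le_right)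
  have := hconv b a hba
  rw [hkey] at this
  refine this.trans (le_muMax ?_ ?_)
  · exact lt_of_le_of_ne le_sup_right (fun h => hba (le_sup_left.trans_eq h.symm))
  · exact sup_le (hb2.trans le_sup_right) le_sup_left

/-- If `x ≰ a` and `a ⊔ x ≤ y`, then `μ_A(⊥,x) ≤ μ_max(a, y)`. -/
lemma muA_bot_le_muMax (hconv : ConvexPayoff μ) {x a y : L} (hxa : ¬ x ≤ a)
    (hxy : a ⊔ x ≤ y) : muA μ ⊥ x ≤ muMax μ a y := by
  have h1 : x ⊓ a < x := lt_of_le_of_ne inf_le_left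
    (fun h => hxa (h ▸ inf_le_right))
  calc muA μ ⊥ x ≤ muMax μ (x ⊓ a) x := muA_le_muMax bot_le h1
    _ ≤ muMax μ a (a ⊔ x) := muMax_convex hconv hxa
    _ ≤ muMax μ a y := muMax_mono_right hxy

lemma neBotOfLe {x y : L} (hx : x ≠ ⊥) (hxy : x ≤ y) : y ≠ ⊥ := by
  rintro rfl; exact hx (le_bot_iff.mp hxy)

/-- From S1 and `f x ≤ f y`, plus totality or `f x ≤ f y` directly, get the
contradiction used repeatedly: if `x ∈ St μ` and `muA μ ⊥ x ≤ muA μ ⊥ y` with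
`y ≰ x`, absurd. -/
lemma st_absurd {x y : L} (hx : x ∈ St μ) (hy : y ≠ ⊥)
    (hle : muA μ ⊥ x ≤ muA μ ⊥ y) (hnyx : ¬ y ≤ x) : False := by
  obtain ⟨_, hS1, hS2⟩ := hx
  rcases hle.lt_or_eq with h | h
  · exact hS1 y hy h
  · exact hnyx (hS2 y hy h.symm)

end Aux

theorem stmt6 [Lattice L] [BoundedOrder L] [CompleteLattice S]
    (hbt : (⊥ : L) ≠ ⊤) (μ : L → L → S) (hconv : ConvexPayoff μ)
    (hS : (∀ s t : S, s ≤ t ∨ t ≤ s) ∨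
      (∀ z : L, z ≠ ⊥ → ∃ a : L, a < z ∧ muA μ ⊥ z = muMax μ a z)) :
    -- (1)
    ((∀ x ∈ St μ, ∀ x' ∈ St μ, x ≤ x' ∨ x' ≤ x) ∧
      ((¬ ∃ f : ℕ → L, StrictMono f) → (St μ).Nonempty →
        ∃ g ∈ St μ, ∀ x ∈ St μ, x ≤ g)) ∧
    -- (2)
    (∀ x ∈ St μ, ∀ y : L, x < y → muA μ ⊥ y = muA μ x y) := by
  -- comparability
  have hcomp : ∀ x ∈ St μ, ∀ x' ∈ St μ, x ≤ x' ∨ x' ≤ x := by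
    intro x hx x' hx'
    rcases hS with htot | hatt
    · -- totally ordered case
      by_contra hcon
      push_neg at hcon
      rcases htot (muA μ ⊥ x) (muA μ ⊥ x') with h | h
      · exact st_absurd hx hx'.1 h hcon.2
      · exact st_absurd hx' hx.1 h hcon.1
    · by_contra hcon
      push_neg at hcon
      obtain ⟨hcon1, hcon2⟩ := hcon
      set z := x ⊔ x' with hz
      have hzb : z ≠ ⊥ := neBotOfLe hx.1 le_sup_left
      obtain ⟨a, haz, heq⟩ := hatt z hzb
      have hone : ¬ x ≤ a ∨ ¬ x' ≤ a := by
        by_contra h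
        push_neg at h
        exact absurd (sup_le h.1 h.2) (not_le_of_gt haz)
      rcases hone with h | h
      · have : muA μ ⊥ x ≤ muA μ ⊥ z := by
          rw [heq]
          exact muA_bot_le_muMax hconv h (sup_le haz.le le_sup_left)
        exact st_absurd hx hzb this (fun hzx => hcon2 (le_sup_right.trans hzx))
      · have : muA μ ⊥ x' ≤ muA μ ⊥ z := by
          rw [heq]
          exact muA_bot_le_muMax hconv h (sup_le haz.le le_sup_right)
        exact st_absurd hx' hzb this (fun hzx => hcon1 (le_sup_left.trans hzx))
  refine ⟨⟨hcomp, ?_⟩, ?_⟩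
  · -- greatest element under ACC
    intro hacc hne
    by_contra hno
    push_neg at hno
    have step : ∀ g ∈ St μ, ∃ x, x ∈ St μ ∧ g < x := by
      intro g hg
      obtain ⟨x, hxSt, hxg⟩ := hno g hg
      refine ⟨x, hxSt, ?_⟩
      rcases hcomp g hg x hxSt with h | h
      · exact lt_of_le_of_ne h (fun hh => hxg (hh ▸ le_refl _))
      · exact absurd h hxg
    choose nxt h1 h2 using step
    obtain ⟨x0, hx0⟩ := hne
    let F : ℕ → {g : L // g ∈ St μ} := fun n =>
      Nat.rec ⟨x0, hx0⟩ (fun _ p => ⟨nxt p.1 p.2, (h1 p.1 p.2)⟩) n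
    have : StrictMono (fun n => (F n).1) :=
      strictMono_nat_of_lt_succ (fun n => h2 (F n).1 (F n).2)
    exact hacc ⟨_, this⟩
  · -- part (2)
    intro x hx y hxy
    have hyb : y ≠ ⊥ := neBotOfLe hx.1 hxy.le
    refine le_antisymm muA_bot_le ?_
    rcases hS with htot | hatt
    · -- totally ordered case
      -- Claim: muA μ ⊥ x ⊓ muA μ x y ≤ muA μ ⊥ y
      have claim : muA μ ⊥ x ⊓ muA μ x y ≤ muA μ ⊥ y := by
        refine le_iInf₂ fun a ha => ?_
        by_cases hxa : x ≤ a
        · exact inf_le_right.trans (muA_le_muMax hxa ha.2)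
        · exact inf_le_left.trans
            (muA_bot_le_muMax hconv hxa (sup_le ha.2.le hxy.le))
      rcases htot (muA μ ⊥ x) (muA μ x y) with h | h
      · -- then muA ⊥ x ≤ muA ⊥ y : contradiction with St
        exfalso
        exact st_absurd hx hyb ((inf_eq_left.mpr h ▸ claim)) hxy.not_ge
      · rw [inf_eq_right.mpr h] at claim
        exact claim
    · obtain ⟨a, hay, heq⟩ := hatt y hyb
      rw [heq]
      by_cases hxa : x ≤ a
      · exact muA_le_muMax hxa hay
      · exfalso
        have : muA μ ⊥ x ≤ muA μ ⊥ y := by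
          rw [heq]
          exact muA_bot_le_muMax hconv hxa (sup_le hay.le hxy.le)
        exact st_absurd hx hyb this hxy.not_ge
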